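/- arXiv:1608.07830 — 2 statements merged into one kernel-verified Lean document; each statement's English description precedes it below -/
import Mathlib

section
/- For any composite number n = pq with p, q ≥ 2, the Seidel operator U_n = (2/n)J_n - I_n cannot be written as a tensor (Kronecker) product U_n = A ⊗ B of a p×p matrix A and a q×q matrix B; i.e., U_n is a global (non-local) unitary operator. -/
open Kronecker

/-- For composite `n = pq` (`p, q ≥ 2`), the Seidel operator `U_n = (2/n)J_n - I_n`
is not a Kronecker product of a `p × p` matrix and a `q × q` matrix:
it is a global (non-local) unitary operator. -/
theorem seidel_is_global (p q : ℕ) (hp : 2 ≤ p) (hq : 2 ≤ q) :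
    ¬ ∃ (A : Matrix (Fin p) (Fin p) ℝ) (B : Matrix (Fin q) (Fin q) ℝ),
      (((2 : ℝ) / (p * q)) • Matrix.of (fun _ _ => (1 : ℝ)) - 1
          : Matrix (Fin (p * q)) (Fin (p * q)) ℝ)
        = Matrix.reindex finProdFinEquiv finProdFinEquiv (A ⊗ₖ B) := by
  rintro ⟨A, B, h⟩
  set c : ℝ := (2 : ℝ) / (p * q) with hc
  have hcpos : 0 < c := by
    apply div_pos (by norm_num)
    have : (0 : ℝ) < (p : ℝ) * q := by
      have hp' : (0 : ℝ) < p := by exact_mod_cast lt_of_lt_of_le (by norm_num) hp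
      have hq' : (0 : ℝ) < q := by exact_mod_cast lt_of_lt_of_le (by norm_num) hq
      exact mul_pos hp' hq'
    exact this
  have key : ∀ (i k : Fin p) (j l : Fin q),
      (if i = k ∧ j = l then c - 1 else c) = A i k * B j l := by
    intro i k j l
    have := congrFun (congrFun h (finProdFinEquiv (i, j))) (finProdFinEquiv (k, l))
    simp only [Matrix.reindex_apply, Matrix.submatrix_apply, Equiv.symm_apply_apply,
      Matrix.kroneckerMap_apply, Matrix.sub_apply, Matrix.smul_apply, Matrix.one_apply,
      Matrix.of_apply, smul_eq_mul, mul_one, EmbeddingLike.apply_eq_iff_eq, Prod.mk.injEq] at this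
    rw [← this]
    by_cases hik : i = k ∧ j = l
    · simp [hik]
    · simp [hik]
  set i0 : Fin p := ⟨0, by omega⟩
  set i1 : Fin p := ⟨1, by omega⟩
  set j0 : Fin q := ⟨0, by omega⟩
  set j1 : Fin q := ⟨1, by omega⟩
  have hi : i0 ≠ i1 := by simp [i0, i1, Fin.ext_iff]
  have hj : j0 ≠ j1 := by simp [j0, j1, Fin.ext_iff]
  have h1 := key i0 i0 j0 j0
  have h2 := key i0 i0 j0 j1
  have h3 := key i0 i1 j0 j0
  have h4 := key i0 i1 j0 j1
  simp [hi, hj] at h1 h2 h3 h4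
  nlinarith [mul_pos hcpos hcpos]
end

section
/- Let U be a unitary on ℂ^m ⊗ ℂ^n with operator Schmidt coefficients s_i (singular values of its coefficient matrix in the product matrix-unit basis). Then the Schmidt strength K_Sch(U) = -∑_i (s_i²/(mn)) log(s_i²/(mn)) is zero if and only if U is a product u₁ ⊗ u₂ of unitaries (up to phase), i.e., if and only if U has exactly one nonzero Schmidt coefficient. -/
open Kronecker
open scoped ComplexOrder

/-!
Realigning `U` into its coefficient matrix `C` only permutes entries, so
`∑ sᵢ² = tr (Cᴴ C) = tr (Uᴴ U) = mn` and `{sᵢ²/(mn)}` is a probability vector; its entropy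
vanishes iff exactly one `sᵢ²` is nonzero, i.e. iff `C` has rank one. A rank-one `C = x yᵀ`
is exactly a product `U = A ⊗ B`. Unitarity of `U` then gives `AᴴA ⊗ BᴴB = 1`, hence
`AᴴA = t⁻¹ • 1` and `BᴴB = t • 1` for some `t > 0`, so `√t • A` and `(√t)⁻¹ • B` are unitary
with the same tensor product.
-/

namespace Real

theorem negMulLog_eq_zero_iff {x : ℝ} (hx : 0 ≤ x) : negMulLog x = 0 ↔ x = 0 ∨ x = 1 := by
  rw [negMulLog, neg_mul, neg_eq_zero, mul_eq_zero, log_eq_zero]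
  constructor
  · rintro (h | h | h | h) <;> first | exact .inl h | exact .inr h | linarith
  · rintro (h | h) <;> simp [h]

theorem sum_negMulLog_eq_zero_iff {ι : Type*} [Fintype ι] {p : ι → ℝ} (hp : ∀ i, 0 ≤ p i)
    (hp_sum : ∑ i, p i = 1) : ∑ i, negMulLog (p i) = 0 ↔ ∃! i, p i ≠ 0 := by
  have hp_le : ∀ i, p i ≤ 1 := fun i =>
    hp_sum ▸ Finset.single_le_sum (fun j _ => hp j) (Finset.mem_univ i)
  rw [Finset.sum_eq_zero_iff_of_nonneg fun i _ => negMulLog_nonneg (hp i) (hp_le i)]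
  simp only [Finset.mem_univ, true_implies, negMulLog_eq_zero_iff (hp _)]
  constructor
  · intro h
    obtain ⟨i, hi⟩ : ∃ i, p i ≠ 0 := by
      by_contra! h0
      simp [h0] at hp_sum
    refine ⟨i, hi, fun j hj => by_contra fun hji => ?_⟩
    classical
    have hpair : p j + p i ≤ 1 := by
      rw [← Finset.sum_pair hji, ← hp_sum]
      exact Finset.sum_le_univ_sum_of_nonneg hp
    linarith [(h i).resolve_left hi, (h j).resolve_left hj]
  · rintro ⟨i, -, hi⟩ j
    have hzero : ∀ j ≠ i, p j = 0 := fun j hj => by_contra fun h => hj (hi j h)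
    rw [Fintype.sum_eq_single i hzero] at hp_sum
    obtain rfl | hj := eq_or_ne j i
    exacts [.inr hp_sum, .inl (hzero j hj)]

end Real

namespace Matrix

section Rank

variable {m n K : Type*} [Fintype n] [Field K]

theorem rank_eq_zero_iff {A : Matrix m n K} : A.rank = 0 ↔ A = 0 := by
  classical
  rw [rank, Submodule.finrank_eq_zero, LinearMap.range_eq_bot, ← toLin'_apply',
    LinearEquiv.map_eq_zero_iff]

theorem exists_vecMulVec_of_rank_le_one {A : Matrix m n K} (hA : A.rank ≤ 1) :
    ∃ x y, A = vecMulVec x y := by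
  classical
  obtain ⟨⟨x, _⟩, hx⟩ := finrank_le_one_iff.mp hA
  have hcol : ∀ j, ∃ c : K, c • x = A *ᵥ Pi.single j 1 := fun j => by
    obtain ⟨c, hc⟩ := hx ⟨_, LinearMap.mem_range_self A.mulVecLin (Pi.single j 1)⟩
    exact ⟨c, congrArg Subtype.val hc⟩
  choose y hy using hcol
  refine ⟨x, y, ext fun i j => ?_⟩
  simpa [mulVec_single_one, vecMulVec_apply, mul_comm] using (congrFun (hy j) i).symm

theorem rank_eq_one_iff {A : Matrix m n K} : A.rank = 1 ↔ A ≠ 0 ∧ ∃ x y, A = vecMulVec x y := by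
  constructor
  · intro h
    exact ⟨fun h0 => by simp [h0] at h, exists_vecMulVec_of_rank_le_one h.le⟩
  · rintro ⟨hA, x, y, rfl⟩
    have := rank_vecMulVec_le x y
    have := mt rank_eq_zero_iff.mp hA
    omega

theorem IsHermitian.existsUnique_eigenvalues_ne_zero_iff {𝕜 : Type*} [RCLike 𝕜] [DecidableEq n]
    {A : Matrix n n 𝕜} (hA : A.IsHermitian) : (∃! i, hA.eigenvalues i ≠ 0) ↔ A.rank = 1 := by
  rw [hA.rank_eq_card_non_zero_eigs, Fintype.card_eq_one_iff]
  constructor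
  · rintro ⟨i, hi, huniq⟩
    exact ⟨⟨i, hi⟩, fun j => Subtype.ext (huniq j j.2)⟩
  · rintro ⟨⟨i, hi⟩, huniq⟩
    exact ⟨i, hi, fun j hj => congrArg Subtype.val (huniq ⟨j, hj⟩)⟩

end Rank

section Realign

variable {α β γ δ R : Type*}

/-- The coefficient matrix of `U = ∑ C_{(a,c),(b,d)} E_{ac} ⊗ E_{bd}` in matrix units. -/
def realign (U : Matrix (α × β) (γ × δ) R) : Matrix (α × γ) (β × δ) R :=
  of fun ac bd => U (ac.1, bd.1) (ac.2, bd.2)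

theorem realign_injective : Function.Injective (realign : Matrix (α × β) (γ × δ) R → _) :=
  fun _ _ h => ext fun ab cd => congrFun₂ h (ab.1, cd.1) (ab.2, cd.2)

theorem realign_eq_zero_iff [Zero R] {U : Matrix (α × β) (γ × δ) R} : realign U = 0 ↔ U = 0 :=
  realign_injective.eq_iff' rfl

theorem realign_kronecker [Mul R] (A : Matrix α γ R) (B : Matrix β δ R) :
    realign (A ⊗ₖ B) = vecMulVec (fun ac => A ac.1 ac.2) (fun bd => B bd.1 bd.2) :=
  rfl

theorem exists_realign_eq_vecMulVec_iff [Mul R] {U : Matrix (α × β) (γ × δ) R} :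
    (∃ x y, realign U = vecMulVec x y) ↔ ∃ (A : Matrix α γ R) (B : Matrix β δ R), U = A ⊗ₖ B := by
  constructor
  · rintro ⟨x, y, h⟩
    exact ⟨of fun a c => x (a, c), of fun b d => y (b, d), realign_injective (h.trans rfl)⟩
  · rintro ⟨A, B, rfl⟩
    exact ⟨_, _, realign_kronecker A B⟩

variable [Fintype α] [Fintype β] [Fintype γ] [Fintype δ]

theorem trace_conjTranspose_mul_self_eq_sum [NonUnitalSemiring R] [StarRing R] (A : Matrix α β R) :
    trace (Aᴴ * A) = ∑ p : α × β, star (A p.1 p.2) * A p.1 p.2 := by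
  rw [Fintype.sum_prod_type, Finset.sum_comm]
  rfl

theorem trace_conjTranspose_mul_self_realign [NonUnitalSemiring R] [StarRing R]
    (U : Matrix (α × β) (γ × δ) R) :
    trace ((realign U)ᴴ * realign U) = trace (Uᴴ * U) := by
  rw [trace_conjTranspose_mul_self_eq_sum, trace_conjTranspose_mul_self_eq_sum]
  exact Fintype.sum_equiv (Equiv.prodProdProdComm _ _ _ _) _ _ fun _ => rfl

theorem sum_eigenvalues_conjTranspose_mul_self_realign [DecidableEq α] [DecidableEq β]
    {U : Matrix (α × β) (α × β) ℂ} (hU : U ∈ unitaryGroup (α × β) ℂ) :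
    ∑ i, (posSemidef_conjTranspose_mul_self (realign U)).isHermitian.eigenvalues i =
      (Fintype.card α : ℝ) * Fintype.card β := by
  have h := (posSemidef_conjTranspose_mul_self (realign U)).isHermitian.trace_eq_sum_eigenvalues
  rw [trace_conjTranspose_mul_self_realign, ← star_eq_conjTranspose,
    mem_unitaryGroup_iff'.mp hU, trace_one, Fintype.card_prod] at h
  apply Complex.ofReal_injective
  push_cast at h ⊢
  exact h.symm

end Realign

section Kronecker

variable {α β : Type*} [DecidableEq α] [DecidableEq β]

theorem exists_eq_smul_one_of_kronecker_eq_one {K : Type*} [Field K] [Nonempty α] [Nonempty β]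
    {P : Matrix α α K} {Q : Matrix β β K} (h : P ⊗ₖ Q = 1) :
    ∃ c : K, c ≠ 0 ∧ P = c⁻¹ • 1 ∧ Q = c • 1 := by
  have hentry : ∀ i j k l, P i j * Q k l = (1 : Matrix α α K) i j * (1 : Matrix β β K) k l :=
    fun i j k l => congrFun₂ (h.trans one_kronecker_one.symm) (i, k) (j, l)
  obtain ⟨i₀⟩ := ‹Nonempty α›
  obtain ⟨k₀⟩ := ‹Nonempty β›
  have h₀ : P i₀ i₀ * Q k₀ k₀ = 1 := by simpa using hentry i₀ i₀ k₀ k₀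
  have hQ : Q k₀ k₀ ≠ 0 := right_ne_zero_of_mul_eq_one h₀
  refine ⟨Q k₀ k₀, hQ, ext fun i j => ?_, ext fun k l => ?_⟩
  · rw [smul_apply, smul_eq_mul, eq_inv_mul_iff_mul_eq₀ hQ, mul_comm]
    simpa using hentry i j k₀ k₀
  · have := hentry i₀ i₀ k l
    rw [eq_inv_of_mul_eq_one_left h₀] at this
    simpa [inv_mul_eq_iff_eq_mul₀ hQ] using this

variable [Fintype α] [Fintype β]

theorem smul_mem_unitaryGroup {R : Type*} [CommRing R] [StarRing R] {A : Matrix α α R} {r s : R}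
    (hA : Aᴴ * A = r • 1) (hs : star s * s * r = 1) : s • A ∈ unitaryGroup α R := by
  rw [mem_unitaryGroup_iff', star_eq_conjTranspose, conjTranspose_smul, smul_mul_smul_comm, hA,
    smul_smul, hs, one_smul]

theorem exists_unitary_kronecker_eq_of_kronecker_mem_unitaryGroup [Nonempty α] [Nonempty β]
    {A : Matrix α α ℂ} {B : Matrix β β ℂ} (hAB : A ⊗ₖ B ∈ unitaryGroup (α × β) ℂ) :
    ∃ u₁ ∈ unitaryGroup α ℂ, ∃ u₂ ∈ unitaryGroup β ℂ, A ⊗ₖ B = u₁ ⊗ₖ u₂ := by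
  have hgram : (Aᴴ * A) ⊗ₖ (Bᴴ * B) = 1 := by
    rw [mul_kronecker_mul, ← conjTranspose_kronecker, ← star_eq_conjTranspose,
      ← mem_unitaryGroup_iff'.mp hAB]
  obtain ⟨c, hc, hA, hB⟩ := exists_eq_smul_one_of_kronecker_eq_one hgram
  obtain ⟨k⟩ := ‹Nonempty β›
  -- `c` is a diagonal entry of the positive semidefinite matrix `Bᴴ * B`
  have hc_pos : 0 < c := by
    have := (posSemidef_conjTranspose_mul_self B).diag_nonneg (i := k)
    rw [hB] at this
    exact lt_of_le_of_ne (by simpa using this) hc.symm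
  obtain ⟨t, ht, rfl⟩ := RCLike.pos_iff_exists_ofReal.mp hc_pos
  have hsqrt : ((√t : ℝ) : ℂ) * (√t : ℝ) = t := by
    rw [← Complex.ofReal_mul, Real.mul_self_sqrt ht.le]
  have hsqrt_ne : ((√t : ℝ) : ℂ) ≠ 0 := by exact_mod_cast (Real.sqrt_pos.mpr ht).ne'
  refine ⟨((√t : ℝ) : ℂ) • A, smul_mem_unitaryGroup hA ?_,
    ((√t : ℝ) : ℂ)⁻¹ • B, smul_mem_unitaryGroup hB ?_, ?_⟩
  · rw [Complex.star_def, Complex.conj_ofReal, hsqrt]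
    exact mul_inv_cancel₀ hc
  · rw [star_inv₀, Complex.star_def, Complex.conj_ofReal, ← mul_inv, hsqrt]
    exact inv_mul_cancel₀ hc
  · rw [smul_kronecker, kronecker_smul, smul_smul, mul_inv_cancel₀ hsqrt_ne, one_smul]

end Kronecker

end Matrix

/-- The Schmidt strength `K_Sch(U)` of a unitary `U` on `ℂ^m ⊗ ℂ^n` (the Shannon entropy
of the distribution `{sᵢ²/(mn)}` of squared operator Schmidt coefficients) vanishes if
and only if `U` is a tensor product of unitaries, if and only if `U` has exactly one
nonzero Schmidt coefficient. -/
theorem schmidt_strength_zero_iff_local (m n : ℕ) (hm : 0 < m) (hn : 0 < n)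
    (U : Matrix (Fin m × Fin n) (Fin m × Fin n) ℂ)
    (hU : U ∈ Matrix.unitaryGroup (Fin m × Fin n) ℂ) :
    let C : Matrix (Fin m × Fin m) (Fin n × Fin n) ℂ :=
      Matrix.of fun ab cd => U (ab.1, cd.1) (ab.2, cd.2)
    let sSq : Fin n × Fin n → ℝ :=
      ((Matrix.posSemidef_conjTranspose_mul_self C).isHermitian).eigenvalues
    let KSch : ℝ := ∑ i, Real.negMulLog (sSq i / (m * n))
    (KSch = 0 ↔
      ∃ u₁ ∈ Matrix.unitaryGroup (Fin m) ℂ, ∃ u₂ ∈ Matrix.unitaryGroup (Fin n) ℂ,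
        U = u₁ ⊗ₖ u₂) ∧
    (KSch = 0 ↔ ∃! i, sSq i ≠ 0) := by
  intro C sSq KSch
  have : NeZero m := ⟨hm.ne'⟩
  have : NeZero n := ⟨hn.ne'⟩
  have hmn : (0 : ℝ) < m * n := by positivity
  have hsum : ∑ i, sSq i = m * n :=
    (Matrix.sum_eigenvalues_conjTranspose_mul_self_realign hU).trans (by simp only [Fintype.card_fin])
  have hEnt : KSch = 0 ↔ ∃! i, sSq i ≠ 0 := by
    refine (Real.sum_negMulLog_eq_zero_iff (fun i => ?_) ?_).trans ?_
    · exact div_nonneg ((Matrix.posSemidef_conjTranspose_mul_self C).eigenvalues_nonneg i) hmn.le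
    · rw [← Finset.sum_div, hsum, div_self hmn.ne']
    · exact existsUnique_congr fun i => by simp [hmn.ne']
  have hC : C ≠ 0 := by
    rw [Ne, show C = Matrix.realign U from rfl, Matrix.realign_eq_zero_iff]
    rintro rfl
    simp [Matrix.mem_unitaryGroup_iff'] at hU
  have hProd : (∃! i, sSq i ≠ 0) ↔
      ∃ u₁ ∈ Matrix.unitaryGroup (Fin m) ℂ, ∃ u₂ ∈ Matrix.unitaryGroup (Fin n) ℂ, U = u₁ ⊗ₖ u₂ := by
    rw [Matrix.IsHermitian.existsUnique_eigenvalues_ne_zero_iff, Matrix.rank_conjTranspose_mul_self,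
      Matrix.rank_eq_one_iff, and_iff_right hC]
    refine Matrix.exists_realign_eq_vecMulVec_iff.trans ⟨?_, ?_⟩
    · rintro ⟨A, B, rfl⟩
      exact Matrix.exists_unitary_kronecker_eq_of_kronecker_mem_unitaryGroup hU
    · rintro ⟨u₁, -, u₂, -, hU⟩
      exact ⟨u₁, u₂, hU⟩
  exact ⟨hEnt.trans hProd, hEnt⟩
end
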